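/- The grid graph P3 □ Pk (Cartesian product of a 3-vertex path and a k-vertex path), for every k ≥ 3, is weakly 2-linked: for every four (not necessarily distinct) vertices u1, v1, u2, v2, there exist a u1–v1 path and a u2–v2 path that are edge-disjoint. -/

import Mathlib

open SimpleGraph

/-- The grid graph `Pm □ Pk` (0-indexed coordinates): `(i,j)` and `(p,q)` are
adjacent iff `|i-p| + |j-q| = 1`. -/
def grid (m k : ℕ) : SimpleGraph (Fin m × Fin k) where
  Adj u v := ((u.1 : ℤ) - v.1).natAbs + ((u.2 : ℤ) - v.2).natAbs = 1
  symm := by constructor; intro u v h; omega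
  loopless := by constructor; intro u h; simp at h

/-- A graph is weakly 2-linked if any two terminal pairs can be joined by
edge-disjoint paths. -/
def Weakly2Linked {V : Type*} (G : SimpleGraph V) : Prop :=
  ∀ u1 v1 u2 v2 : V, ∃ (p : G.Walk u1 v1) (q : G.Walk u2 v2),
    p.IsPath ∧ q.IsPath ∧ p.edges.Disjoint q.edges

/-!
Join the first pair by a route that steps into the middle row, runs along it and steps out
again. Deleting the edges of this route leaves the graph connected: the outer rows are untouched,
a column avoiding both ends of the route joins them, and every middle vertex keeps a vertical edge,
or, if the route never runs along the middle row, keeps that whole row. The second pair is then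
joined in what remains. Only the connectivity of `H` and a third column are used, so the argument
works for every `P₃ □ H`.
-/

theorem Weakly2Linked.of_preconnected_deleteEdges {V : Type*} {G : SimpleGraph V}
    (h : ∀ u v, ∃ (p : G.Walk u v) (D : Set (Sym2 V)),
      (∀ e ∈ p.edges, e ∈ D) ∧ (G.deleteEdges D).Preconnected) :
    Weakly2Linked G := by
  classical
  intro u₁ v₁ u₂ v₂
  obtain ⟨p, D, hpD, hD⟩ := h u₁ v₁
  obtain ⟨q⟩ := hD u₂ v₂
  refine ⟨p.bypass, (q.mapLe (G.deleteEdges_le D)).bypass, p.bypass_isPath,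
    Walk.bypass_isPath _, fun e hp hq => ?_⟩
  replace hq := (q.mapLe _).edges_bypass_subset_edges hq
  rw [Walk.edges_mapLe_eq_edges] at hq
  have hqD := q.edges_subset_edgeSet hq
  rw [edgeSet_deleteEdges] at hqD
  exact hqD.2 (hpD e (p.edges_bypass_subset_edges hp))

lemma exists_ne_and_ne_of_two_lt_card {β : Type*} (h : 2 < ENat.card β) (b d : β) :
    ∃ j, j ≠ b ∧ j ≠ d := by
  by_contra! hbd
  have hsub : (Set.univ : Set β) ⊆ {b, d} := fun j _ => by
    by_cases hj : j = b
    · exact .inl hj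
    · exact .inr (hbd j hj)
  have := (Set.encard_le_encard hsub).trans (Set.encard_insert_le {d} b)
  rw [Set.encard_univ, Set.encard_singleton] at this
  exact absurd (h.trans_le this) (by norm_num)

lemma grid_eq_boxProd (m n : ℕ) : grid m n = pathGraph m □ pathGraph n := by
  ext x y
  simp only [grid, boxProd_adj, pathGraph_adj, Fin.ext_iff]
  omega

section PathThreeBoxProd

variable {α β : Type*} {H : SimpleGraph β}

lemma exists_walk_boxProd_right (G : SimpleGraph α) (hH : H.Preconnected) (t : α) (b d : β) :
    ∃ w : (G □ H).Walk (t, b) (t, d), ∀ e ∈ w.edges, b ≠ d ∧ ∀ x ∈ e, x.1 = t := by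
  by_cases hbd : b = d
  · subst hbd
    exact ⟨.nil, by simp⟩
  · obtain ⟨w⟩ := hH b d
    refine ⟨w.map (G.boxProdRight H t).toHom, fun e he => ⟨hbd, ?_⟩⟩
    replace he : e ∈ (w.map (G.boxProdRight H t).toHom).edges := he
    rw [Walk.edges_map, List.mem_map] at he
    obtain ⟨e', -, rfl⟩ := he
    induction e' using Sym2.ind
    simp

lemma exists_walk_to_middle_row (a : Fin 3) (b : β) :
    ∃ w : (pathGraph 3 □ H).Walk (a, b) (1, b), ∀ e ∈ w.edges, e = s((a, b), (1, b)) := by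
  by_cases ha : a = 1
  · subst ha
    exact ⟨.nil, by simp⟩
  · have hadj : (pathGraph 3 □ H).Adj (a, b) (1, b) := by
      rw [boxProd_adj_left, pathGraph_adj]
      omega
    exact ⟨.cons hadj .nil, by simp⟩

/-- Contains the edges of the route `(a, b) → (1, b) → (1, d) → (c, d)`: the two vertical steps
and, when `b ≠ d`, the whole middle row, along which the route follows an arbitrary walk of `H`. -/
def middleRouteEdges (a : Fin 3) (b : β) (c : Fin 3) (d : β) : Set (Sym2 (Fin 3 × β)) :=
  {s((a, b), (1, b)), s((c, d), (1, d))} ∪ {e | b ≠ d ∧ ∀ x ∈ e, x.1 = 1}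

lemma exists_walk_edges_subset_middleRouteEdges (hH : H.Preconnected) (a c : Fin 3) (b d : β) :
    ∃ p : (pathGraph 3 □ H).Walk (a, b) (c, d), ∀ e ∈ p.edges, e ∈ middleRouteEdges a b c d := by
  obtain ⟨w₁, h₁⟩ := exists_walk_to_middle_row (H := H) a b
  obtain ⟨w₂, h₂⟩ := exists_walk_boxProd_right (pathGraph 3) hH 1 b d
  obtain ⟨w₃, h₃⟩ := exists_walk_to_middle_row (H := H) c d
  refine ⟨w₁.append (w₂.append w₃.reverse), fun e he => ?_⟩
  simp only [Walk.edges_append, Walk.edges_reverse, List.mem_append, List.mem_reverse] at he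
  rcases he with he | he | he
  · exact .inl (.inl (h₁ e he))
  · exact .inr (h₂ e he)
  · exact .inl (.inr (h₃ e he))

variable {a c : Fin 3} {b d : β}

lemma adj_deleteEdges_middleRouteEdges_of_row {t : Fin 3} (ht : t ≠ 1 ∨ b = d) {j j' : β}
    (hj : H.Adj j j') :
    ((pathGraph 3 □ H).deleteEdges (middleRouteEdges a b c d)).Adj (t, j) (t, j') := by
  have := hj.ne
  simp only [deleteEdges_adj, boxProd_adj_right, middleRouteEdges, Set.mem_union,
    Set.mem_insert_iff, Set.mem_singleton_iff, Set.mem_ofPred_eq, Sym2.forall_mem_pair, Sym2.eq_iff,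
    Prod.ext_iff]
  grind

lemma adj_deleteEdges_middleRouteEdges_of_column {t : Fin 3} (ht : t ≠ 1) {j : β}
    (hb : ¬(t = a ∧ j = b)) (hd : ¬(t = c ∧ j = d)) :
    ((pathGraph 3 □ H).deleteEdges (middleRouteEdges a b c d)).Adj (1, j) (t, j) := by
  simp only [deleteEdges_adj, boxProd_adj_left, pathGraph_adj, middleRouteEdges, Set.mem_union,
    Set.mem_insert_iff, Set.mem_singleton_iff, Set.mem_ofPred_eq, Sym2.forall_mem_pair, Sym2.eq_iff,
    Prod.ext_iff]
  grind

lemma exists_adj_deleteEdges_middleRouteEdges_of_ne (hbd : b ≠ d) (j : β) :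
    ∃ t ≠ 1, ((pathGraph 3 □ H).deleteEdges (middleRouteEdges a b c d)).Adj (1, j) (t, j) := by
  by_cases h₀ : (0 = a ∧ j = b) ∨ (0 = c ∧ j = d)
  · refine ⟨2, by decide, adj_deleteEdges_middleRouteEdges_of_column (by decide) ?_ ?_⟩ <;> grind
  · exact ⟨0, by decide, adj_deleteEdges_middleRouteEdges_of_column (by decide) (by tauto)
      (by tauto)⟩

lemma preconnected_deleteEdges_middleRouteEdges (hH : H.Preconnected) (h3 : 2 < ENat.card β) :
    ((pathGraph 3 □ H).deleteEdges (middleRouteEdges a b c d)).Preconnected := by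
  set K := (pathGraph 3 □ H).deleteEdges (middleRouteEdges a b c d)
  obtain ⟨j₀, hb, hd⟩ := exists_ne_and_ne_of_two_lt_card h3 b d
  have row (t : Fin 3) (ht : t ≠ 1 ∨ b = d) (j : β) : K.Reachable (t, j) (t, j₀) :=
    (hH j j₀).map ⟨fun j => (t, j), adj_deleteEdges_middleRouteEdges_of_row ht⟩
  have column (t : Fin 3) : K.Reachable (t, j₀) (0, j₀) := by
    have hadj (t : Fin 3) (ht : t ≠ 1) : K.Adj (1, j₀) (t, j₀) :=
      adj_deleteEdges_middleRouteEdges_of_column ht (by tauto) (by tauto)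
    fin_cases t
    · rfl
    · exact (hadj 0 (by decide)).reachable
    · exact (hadj 2 (by decide)).symm.reachable.trans (hadj 0 (by decide)).reachable
  suffices ∀ x, K.Reachable x (0, j₀) from fun x y => (this x).trans (this y).symm
  rintro ⟨t, j⟩
  by_cases ht : t ≠ 1 ∨ b = d
  · exact (row t ht j).trans (column t)
  · rw [not_or, not_not] at ht
    obtain ⟨rfl, hbd⟩ := ht
    obtain ⟨t, ht, hadj⟩ := exists_adj_deleteEdges_middleRouteEdges_of_ne (a := a) (c := c) hbd j
    exact hadj.reachable.trans ((row t (.inl ht) j).trans (column t))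

theorem weakly2Linked_pathGraph_three_boxProd (hH : H.Preconnected) (h3 : 2 < ENat.card β) :
    Weakly2Linked (pathGraph 3 □ H) :=
  Weakly2Linked.of_preconnected_deleteEdges fun ⟨a, b⟩ ⟨c, d⟩ =>
    let ⟨p, hp⟩ := exists_walk_edges_subset_middleRouteEdges hH a c b d
    ⟨p, _, hp, preconnected_deleteEdges_middleRouteEdges hH h3⟩

end PathThreeBoxProd

/-- For every `k ≥ 3`, the grid `P3 □ Pk` is weakly 2-linked. -/
theorem grid3k_weakly2Linked (k : ℕ) (hk : 3 ≤ k) : Weakly2Linked (grid 3 k) := by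
  rw [grid_eq_boxProd]
  refine weakly2Linked_pathGraph_three_boxProd (pathGraph_preconnected k) ?_
  rw [ENat.card_eq_coe_fintype_card, Fintype.card_fin]
  exact_mod_cast hk
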